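/- arXiv:2002.03298 — 5 statements merged into one kernel-verified Lean document; each statement's English description precedes it below -/
import Mathlib

section
/- Under the hypotheses of the duality theorem, suppose in addition that ℓ is finite at at least two distinct points of the strictly positive orthant ℝ^n_{++}. If for every instance the restriction of the dual problem to componentwise non-negative α does not change its optimal solutions—equivalently, if ℓ* + I(ℝ^n_−) has the same conjugate as ℓ*, where I(ℝ^n_−) is the indicator of the non-positive orthant—then ℓ satisfies ℓ(p) = inf_{ξ ∈ ℝ^n, ξ ⪰ 0} ℓ(p − ξ) for all p in the domain of ℓ. -/
open Matrix

noncomputable section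

/-- Fenchel conjugate of an extended-real-valued function on `ℝ^m`. -/
def econj {m : ℕ} (f : (Fin m → ℝ) → EReal) (y : Fin m → ℝ) : EReal :=
  ⨆ x : Fin m → ℝ, ((y ⬝ᵥ x : ℝ) : EReal) - f x

/-- A function is proper if it never takes `-∞` and is finite somewhere. -/
def eproper {m : ℕ} (f : (Fin m → ℝ) → EReal) : Prop :=
  (∀ x, f x ≠ ⊥) ∧ ∃ x, f x ≠ ⊤

/-- Convexity for extended-real-valued functions. -/
def econvex {m : ℕ} (f : (Fin m → ℝ) → EReal) : Prop :=
  ∀ x y : Fin m → ℝ, ∀ a b : ℝ, 0 ≤ a → 0 ≤ b → a + b = 1 →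
    f (a • x + b • y) ≤ (a : EReal) * f x + (b : EReal) * f y

/-- Support function of a set. -/
def supportFn {d : ℕ} (C : Set (Fin d → ℝ)) (β : Fin d → ℝ) : EReal :=
  ⨆ s ∈ C, ((s ⬝ᵥ β : ℝ) : EReal)

/-- The primal objective `ℓ(Xβ) + ∑ λ_C sup_{s∈C}⟨s,β⟩ + φ(β) + ω(β)`. -/
def primalObj {n d : ℕ} {ι : Type} [Fintype ι] (X : Matrix (Fin n) (Fin d) ℝ)
    (l : (Fin n → ℝ) → EReal) (φ ω : (Fin d → ℝ) → EReal)
    (C : ι → Set (Fin d → ℝ)) (lam : ι → ℝ) (β : Fin d → ℝ) : EReal :=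
  l (X.mulVec β) + ∑ i, (lam i : EReal) * supportFn (C i) β + φ β + ω β

/-- The dual regularization function ψ. -/
def psiFn {d : ℕ} {ι : Type} [Fintype ι] (φ ω : (Fin d → ℝ) → EReal)
    (C : ι → Set (Fin d → ℝ)) (lam : ι → ℝ) (ζ : Fin d → ℝ) : EReal :=
  ⨅ (s : ι → Fin d → ℝ) (_ : ∀ i, s i ∈ C i) (ξ : Fin d → ℝ),
    econj φ (ζ - ∑ i, lam i • s i - ξ) + econj ω ξ

/-- The dual objective `-ℓ*(-α) - ψ(Xᵀα)`. -/
def dualObj {n d : ℕ} {ι : Type} [Fintype ι] (X : Matrix (Fin n) (Fin d) ℝ)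
    (l : (Fin n → ℝ) → EReal) (φ ω : (Fin d → ℝ) → EReal)
    (C : ι → Set (Fin d → ℝ)) (lam : ι → ℝ) (α : Fin n → ℝ) : EReal :=
  - econj l (-α) - psiFn φ ω C lam (Xᵀ.mulVec α)

/-- Subdifferential of an extended-real-valued function. -/
def esubdiff {m : ℕ} (f : (Fin m → ℝ) → EReal) (x : Fin m → ℝ) : Set (Fin m → ℝ) :=
  {v | ∀ z : Fin m → ℝ, f x + ((v ⬝ᵥ (z - x) : ℝ) : EReal) ≤ f z}

open Classical in
/-- Indicator function of the non-positive orthant `ℝ^n₋`. -/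
def indNonpos {n : ℕ} (u : Fin n → ℝ) : EReal :=
  if u ≤ 0 then (0 : EReal) else ⊤

section Aux

variable {n : ℕ}

private lemma real_sub_le_of_le {r : ℝ} {b c : EReal} (h : (r : EReal) - c ≤ b) :
    (r : EReal) - b ≤ c := by
  rcases eq_or_ne c ⊤ with hc | hc
  · simp [hc]
  rcases eq_or_ne b ⊤ with hb | hb
  · rw [hb, EReal.sub_top]; exact bot_le
  rcases eq_or_ne c ⊥ with hc' | hc'
  · rw [hc', EReal.coe_sub_bot] at h
    exact absurd (top_le_iff.mp h) hb
  have h' : (r : EReal) ≤ b + c := by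
    rwa [EReal.sub_le_iff_le_add (Or.inl hc') (Or.inl hc)] at h
  rw [EReal.sub_le_iff_le_add (Or.inr hc) (Or.inl hb)]
  rwa [add_comm]

private lemma fenchel_young (l : (Fin n → ℝ) → EReal) (x y : Fin n → ℝ) :
    ((y ⬝ᵥ x : ℝ) : EReal) - econj l y ≤ l x :=
  real_sub_le_of_le (le_iSup (fun z => ((y ⬝ᵥ z : ℝ) : EReal) - l z) x)

private lemma biconj_le (l : (Fin n → ℝ) → EReal) (x : Fin n → ℝ) :
    econj (econj l) x ≤ l x :=
  iSup_le fun y => by rw [dotProduct_comm]; exact fenchel_young l x y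

private lemma conj_ne_bot (l : (Fin n → ℝ) → EReal) (w : Fin n → ℝ) (hw : l w ≠ ⊤)
    (u : Fin n → ℝ) : econj l u ≠ ⊥ := by
  have h : ((u ⬝ᵥ w : ℝ) : EReal) - l w ≤ econj l u :=
    le_iSup (fun z => ((u ⬝ᵥ z : ℝ) : EReal) - l z) w
  intro hbot
  rw [hbot, le_bot_iff, sub_eq_add_neg, EReal.add_eq_bot_iff] at h
  rcases h with h | h
  · exact EReal.coe_ne_bot _ h
  · rw [EReal.neg_eq_bot_iff] at h
    exact hw h

private lemma key_mono (l : (Fin n → ℝ) → EReal) (hproper : eproper l)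
    {ξ : Fin n → ℝ} (hξ : 0 ≤ ξ) (x : Fin n → ℝ) :
    econj (fun u => econj l u + indNonpos u) x ≤ econj (econj l) (x - ξ) := by
  obtain ⟨w, hw⟩ := hproper.2
  refine iSup_le fun u => ?_
  show ((x ⬝ᵥ u : ℝ) : EReal) - (econj l u + indNonpos u) ≤ econj (econj l) (x - ξ)
  by_cases hu : u ≤ 0
  · have h0 : (ξ ⬝ᵥ u : ℝ) ≤ 0 :=
      Finset.sum_nonpos fun i _ => mul_nonpos_of_nonneg_of_nonpos (hξ i) (hu i)
    have h1 : (x ⬝ᵥ u : ℝ) ≤ ((x - ξ) ⬝ᵥ u : ℝ) := by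
      rw [sub_dotProduct]; linarith
    calc ((x ⬝ᵥ u : ℝ) : EReal) - (econj l u + indNonpos u)
        = ((x ⬝ᵥ u : ℝ) : EReal) - econj l u := by
          simp only [indNonpos, if_pos hu, add_zero]
      _ ≤ (((x - ξ) ⬝ᵥ u : ℝ) : EReal) - econj l u :=
          EReal.sub_le_sub (EReal.coe_le_coe_iff.2 h1) le_rfl
      _ ≤ econj (econj l) (x - ξ) :=
          le_iSup (fun v => (((x - ξ) ⬝ᵥ v : ℝ) : EReal) - econj l v) u
  · have htop : econj l u + indNonpos u = ⊤ := by
      simp only [indNonpos, if_neg hu]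
      exact EReal.add_top_of_ne_bot (conj_ne_bot l w hw u)
    rw [htop, EReal.sub_top]
    exact bot_le

private lemma le_biconj (l : (Fin n → ℝ) → EReal) (hproper : eproper l) (hconv : econvex l)
    (hclosed : LowerSemicontinuous l) (x : Fin n → ℝ) (hx : l x ≠ ⊤) :
    l x ≤ econj (econj l) x := by
  have hxb := hproper.1 x
  set a : ℝ := (l x).toReal with ha
  have hla : l x = (a : EReal) := (EReal.coe_toReal hx hxb).symm
  rw [hla]
  by_contra hcon
  push_neg at hcon
  obtain ⟨r, hr1, hr2⟩ := EReal.exists_between_coe_real hcon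
  have hra : r < a := by exact_mod_cast hr2
  set S : Set ((Fin n → ℝ) × ℝ) := {p | l p.1 ≤ (p.2 : EReal)} with hS
  have hSclosed : IsClosed S := by
    have h1 : IsClosed {p : (Fin n → ℝ) × EReal | l p.1 ≤ p.2} :=
      hclosed.isClosed_epigraph
    have h2 : Continuous (fun p : (Fin n → ℝ) × ℝ => ((p.1, (p.2 : EReal)))) :=
      continuous_fst.prodMk (continuous_coe_real_ereal.comp continuous_snd)
    exact h1.preimage h2
  have hSconv : Convex ℝ S := by
    rintro ⟨z1, t1⟩ h1 ⟨z2, t2⟩ h2 b c hb hc hbc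
    simp only [hS, Set.mem_setOf_eq] at h1 h2
    show l (b • z1 + c • z2) ≤ ((b * t1 + c * t2 : ℝ) : EReal)
    calc l (b • z1 + c • z2) ≤ (b : EReal) * l z1 + (c : EReal) * l z2 :=
          hconv z1 z2 b c hb hc hbc
      _ ≤ (b : EReal) * (t1 : EReal) + (c : EReal) * (t2 : EReal) :=
          add_le_add (mul_le_mul_of_nonneg_left h1 (by exact_mod_cast hb))
            (mul_le_mul_of_nonneg_left h2 (by exact_mod_cast hc))
      _ = ((b * t1 + c * t2 : ℝ) : EReal) := by
          rw [EReal.coe_add, EReal.coe_mul, EReal.coe_mul]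
  have hxS : ((x, r) : (Fin n → ℝ) × ℝ) ∉ S := by
    intro h
    rw [hS] at h
    simp only [Set.mem_setOf_eq] at h
    rw [hla, EReal.coe_le_coe_iff] at h
    exact absurd h (not_le.2 hra)
  obtain ⟨f, u, hfS, hfx⟩ := geometric_hahn_banach_closed_point hSconv hSclosed hxS
  set s : ℝ := f (0, 1) with hs
  set c : Fin n → ℝ := fun i => f ((fun j => if i = j then 1 else 0), 0) with hc
  have hf : ∀ z t, f (z, t) = c ⬝ᵥ z + t * s := by
    intro z t
    have h1 : (z, t) = ((z, 0) : (Fin n → ℝ) × ℝ) + t • ((0, 1) : (Fin n → ℝ) × ℝ) := by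
      ext <;> simp
    rw [h1, map_add, _root_.map_smul, smul_eq_mul]
    congr 1
    have h2 := LinearMap.pi_apply_eq_sum_univ
      ((f : ((Fin n → ℝ) × ℝ) →ₗ[ℝ] ℝ).comp (LinearMap.inl ℝ (Fin n → ℝ) ℝ)) z
    simp only [LinearMap.comp_apply, LinearMap.inl_apply, ContinuousLinearMap.coe_coe] at h2
    rw [h2, dotProduct]
    exact Finset.sum_congr rfl fun i _ => by rw [smul_eq_mul, mul_comm]
  have hxaS : ((x, a) : (Fin n → ℝ) × ℝ) ∈ S := by
    rw [hS]; simp only [Set.mem_setOf_eq]; rw [hla]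
  have h1 : c ⬝ᵥ x + a * s < u := by rw [← hf]; exact hfS _ hxaS
  have h2 : u < c ⬝ᵥ x + r * s := by rw [← hf]; exact hfx
  have hs0 : s < 0 := by nlinarith
  have hsneg : (0 : ℝ) < -s := by linarith
  set y : Fin n → ℝ := fun i => c i / (-s) with hy
  set K : ℝ := u / (-s) with hK
  have hconj_le : econj l y ≤ (K : EReal) := by
    refine iSup_le fun z => ?_
    rcases eq_or_ne (l z) ⊤ with hz | hz
    · rw [hz, EReal.sub_top]; exact bot_le
    · have hzb := hproper.1 z
      have hlz : l z = (((l z).toReal : ℝ) : EReal) := (EReal.coe_toReal hz hzb).symm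
      set t : ℝ := (l z).toReal
      have hzS : ((z, t) : (Fin n → ℝ) × ℝ) ∈ S := by
        rw [hS]; simp only [Set.mem_setOf_eq]; exact le_of_eq hlz
      have h3 : c ⬝ᵥ z + t * s < u := by rw [← hf]; exact hfS _ hzS
      have hyz : y ⬝ᵥ z = (c ⬝ᵥ z) / (-s) := by
        rw [dotProduct, dotProduct, Finset.sum_div]
        exact Finset.sum_congr rfl fun i _ => by
          show c i / (-s) * z i = c i * z i / (-s)
          ring
      have h4 : y ⬝ᵥ z - t ≤ K := by
        rw [hyz, hK, sub_le_iff_le_add, div_le_iff₀ hsneg, add_mul,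
          div_mul_cancel₀ _ (ne_of_gt hsneg)]
        linarith
      calc ((y ⬝ᵥ z : ℝ) : EReal) - l z = ((y ⬝ᵥ z - t : ℝ) : EReal) := by
            rw [hlz, ← EReal.coe_sub]
        _ ≤ (K : EReal) := EReal.coe_le_coe_iff.2 h4
  have hxy : K + r < x ⬝ᵥ y := by
    have hxyc : x ⬝ᵥ y = (c ⬝ᵥ x) / (-s) := by
      rw [dotProduct, dotProduct, Finset.sum_div]
      exact Finset.sum_congr rfl fun i _ => by
        show x i * (c i / (-s)) = c i * x i / (-s)
        ring
    rw [hxyc, hK, lt_div_iff₀ hsneg, add_mul, div_mul_cancel₀ _ (ne_of_gt hsneg)]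
    linarith
  have hfin : (r : EReal) ≤ ((x ⬝ᵥ y : ℝ) : EReal) - econj l y := by
    have h5 : ((x ⬝ᵥ y : ℝ) : EReal) - (K : EReal) ≤ ((x ⬝ᵥ y : ℝ) : EReal) - econj l y :=
      EReal.sub_le_sub le_rfl hconj_le
    refine le_trans ?_ h5
    rw [← EReal.coe_sub, EReal.coe_le_coe_iff]
    linarith
  have h6 : (r : EReal) ≤ econj (econj l) x :=
    hfin.trans (le_iSup (fun v => ((x ⬝ᵥ v : ℝ) : EReal) - econj l v) y)
  exact absurd hr1 (not_lt.2 h6)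

end Aux


/-- Theorem 4 of the paper, converse direction: if `ℓ` is closed proper
convex, finite at two distinct strictly positive points, and `ℓ* + I(ℝ^n₋)` has the same
Fenchel conjugate as `ℓ*`, then `ℓ(p) = inf_{ξ ⪰ 0} ℓ(p − ξ)` on the domain of `ℓ`. -/
theorem stmt_5 {n : ℕ} (l : (Fin n → ℝ) → EReal)
    (hproper : eproper l) (hconv : econvex l) (hclosed : LowerSemicontinuous l)
    (p q : Fin n → ℝ) (hpq : p ≠ q)
    (hp : ∀ i, 0 < p i) (hq : ∀ i, 0 < q i)
    (hlp : l p ≠ ⊤) (hlq : l q ≠ ⊤)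
    (hsame : ∀ x : Fin n → ℝ,
      econj (fun u => econj l u + indNonpos u) x = econj (econj l) x) :
    ∀ x : Fin n → ℝ, l x ≠ ⊤ →
      l x = ⨅ (ξ : Fin n → ℝ) (_ : 0 ≤ ξ), l (x - ξ) := by
  intro x hx
  have hmono : ∀ ξ : Fin n → ℝ, 0 ≤ ξ → l x ≤ l (x - ξ) := by
    intro ξ hξ
    calc l x ≤ econj (econj l) x := le_biconj l hproper hconv hclosed x hx
      _ = econj (fun u => econj l u + indNonpos u) x := (hsame x).symm
      _ ≤ econj (econj l) (x - ξ) := key_mono l hproper hξ x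
      _ ≤ l (x - ξ) := biconj_le l _
  apply le_antisymm
  · exact le_iInf fun ξ => le_iInf fun hξ => hmono ξ hξ
  · refine iInf_le_of_le 0 (iInf_le_of_le (le_refl 0) ?_)
    rw [sub_zero]


end
end

section
/- Fix y ∈ ℝ and define f : ℝ → ℝ by f(x) = −yx + log(1 + e^x). Then the Fenchel conjugate of f is f*(α) = (α + y)·log(α + y) + (1 − α − y)·log(1 − α − y) whenever 0 ≤ α + y ≤ 1 (with the convention 0·log 0 = 0), and f*(α) = +∞ otherwise. -/
/-!
Substituting `β = α + y` reduces the claim to the conjugate of the softplus function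
`log (1 + eˣ)` at `β`. For `0 ≤ β ≤ 1`, Gibbs' inequality bounds `β x - log (1 + eˣ)` by
`β log β + (1 - β) log (1 - β)`; the bound is attained at `x = log (β / (1 - β))` when `0 < β < 1`
and approached as `x → -∞` when `β = 0`. For `β < 0` the objective tends to `+∞` as `x → -∞`.
The identity `log (1 + e⁻ˣ) = log (1 + eˣ) - x` makes the conjugate invariant under `β ↦ 1 - β`,
which transfers both facts to `β = 1` and `β > 1`.
-/

open Real Filter Topology

noncomputable section

/-- Fenchel conjugate of a real-valued function on `ℝ`. -/
def rconj (f : ℝ → ℝ) (a : ℝ) : EReal :=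
  ⨆ x : ℝ, ((a * x - f x : ℝ) : EReal)

lemma rconj_of_eq_neg_mul_add {f g : ℝ → ℝ} {y : ℝ} (hf : ∀ x, f x = -y * x + g x) (α : ℝ) :
    rconj f α = rconj g (α + y) := by
  simp only [rconj, hf]
  congr! 3
  ring

lemma le_rconj_of_tendsto {f : ℝ → ℝ} {a c : ℝ} {l : Filter ℝ} [l.NeBot]
    (h : Tendsto (fun x ↦ a * x - f x) l (𝓝 c)) : (c : EReal) ≤ rconj f a :=
  le_of_tendsto' ((continuous_coe_real_ereal.tendsto c).comp h) fun x ↦ le_iSup_of_le x le_rfl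

lemma rconj_eq_top_of_tendsto {f : ℝ → ℝ} {a : ℝ} {l : Filter ℝ} [l.NeBot]
    (h : Tendsto (fun x ↦ a * x - f x) l atTop) : rconj f a = ⊤ :=
  eq_top_iff.2 <| le_of_tendsto' (EReal.tendsto_coe_atTop.comp h) fun x ↦ le_iSup_of_le x le_rfl

lemma rconj_eq_coe_of_le {f : ℝ → ℝ} {a c : ℝ} (hle : ∀ x, a * x - f x ≤ c)
    (hc : (c : EReal) ≤ rconj f a) : rconj f a = c :=
  le_antisymm (iSup_le fun x ↦ EReal.coe_le_coe (hle x)) hc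

lemma mul_log_le_mul_log_add_sub {b p : ℝ} (hb : 0 ≤ b) (hp : 0 < p) :
    b * log p ≤ b * log b + (p - b) := by
  rcases hb.eq_or_lt with rfl | hb
  · simpa using hp.le
  calc b * log p = b * log b + b * (log p - log b) := by ring
    _ ≤ b * log b + b * (p / b - 1) := by
      rw [← log_div hp.ne' hb.ne']
      gcongr
      exact log_le_sub_one_of_pos (div_pos hp hb)
    _ = b * log b + (p - b) := by field_simp

def softplus (x : ℝ) : ℝ := log (1 + exp x)

lemma softplus_neg (x : ℝ) : softplus (-x) = softplus x - x := by
  have : 1 + exp (-x) = exp (-x) * (1 + exp x) := by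
    rw [mul_add, mul_one, ← exp_add, neg_add_cancel, exp_zero, add_comm]
  rw [softplus, softplus, this, log_mul (exp_pos _).ne' (by positivity), log_exp]
  ring

lemma tendsto_softplus_atBot : Tendsto softplus atBot (𝓝 0) := by
  have h : Tendsto (fun x ↦ 1 + exp x) atBot (𝓝 1) := by
    simpa using tendsto_exp_atBot.const_add 1
  unfold softplus
  simpa [Function.comp_def] using (continuousAt_log one_ne_zero).tendsto.comp h

lemma rconj_softplus_one_sub (b : ℝ) : rconj softplus (1 - b) = rconj softplus b := by
  rw [rconj, ← neg_surjective.iSup_comp]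
  simp only [rconj, softplus_neg]
  congr! 3
  ring

/-- With `p = eˣ / (1 + eˣ)` and `q = 1 / (1 + eˣ)` the left side is `b log p + (1 - b) log q`,
so this is Gibbs' inequality for the two-point distributions `(b, 1 - b)` and `(p, q)`. -/
lemma mul_sub_softplus_le {b : ℝ} (hb₀ : 0 ≤ b) (hb₁ : b ≤ 1) (x : ℝ) :
    b * x - softplus x ≤ b * log b + (1 - b) * log (1 - b) := by
  have hs : 0 < 1 + exp x := by positivity
  set p := exp x / (1 + exp x)
  set q := 1 / (1 + exp x)
  have hlogp : log p = x - softplus x := by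
    rw [log_div (exp_pos x).ne' hs.ne', log_exp, softplus]
  have hlogq : log q = - softplus x := by
    rw [log_div one_ne_zero hs.ne', log_one, zero_sub, softplus]
  have hpq : p + q = 1 := by rw [← add_div, add_comm, div_self hs.ne']
  have hp := mul_log_le_mul_log_add_sub hb₀ (div_pos (exp_pos x) hs)
  have hq := mul_log_le_mul_log_add_sub (sub_nonneg.2 hb₁) (div_pos one_pos hs)
  rw [hlogp] at hp
  rw [hlogq] at hq
  linarith

lemma rconj_softplus_eq_top_of_neg {b : ℝ} (hb : b < 0) : rconj softplus b = ⊤ :=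
  rconj_eq_top_of_tendsto (l := atBot) <| by
    simpa only [sub_eq_add_neg, neg_zero, id] using
      (tendsto_id.const_mul_atBot_of_neg hb).atTop_add tendsto_softplus_atBot.neg

lemma rconj_softplus_zero : rconj softplus 0 = 0 := by
  refine rconj_eq_coe_of_le (fun x ↦ ?_) ?_
  · simpa using mul_sub_softplus_le le_rfl zero_le_one x
  · exact le_rconj_of_tendsto (l := atBot) (by simpa using tendsto_softplus_atBot.neg)

lemma rconj_softplus_of_mem_Ioo {b : ℝ} (hb₀ : 0 < b) (hb₁ : b < 1) :
    rconj softplus b = ((b * log b + (1 - b) * log (1 - b) : ℝ) : EReal) := by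
  refine rconj_eq_coe_of_le (mul_sub_softplus_le hb₀.le hb₁.le) ?_
  have h1b : 0 < 1 - b := sub_pos.2 hb₁
  have hx : b * log (b / (1 - b)) - softplus (log (b / (1 - b))) =
      b * log b + (1 - b) * log (1 - b) := by
    have : 1 + b / (1 - b) = (1 - b)⁻¹ := by field_simp; ring
    rw [softplus, exp_log (div_pos hb₀ h1b), this, log_inv, log_div hb₀.ne' h1b.ne']
    ring
  exact hx ▸ le_iSup_of_le (log (b / (1 - b))) le_rfl

lemma rconj_softplus_of_mem_Icc {b : ℝ} (hb₀ : 0 ≤ b) (hb₁ : b ≤ 1) :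
    rconj softplus b = ((b * log b + (1 - b) * log (1 - b) : ℝ) : EReal) := by
  rcases hb₀.eq_or_lt with rfl | hb₀
  · simpa using rconj_softplus_zero
  rcases hb₁.eq_or_lt with rfl | hb₁
  · simpa [← rconj_softplus_one_sub 1] using rconj_softplus_zero
  exact rconj_softplus_of_mem_Ioo hb₀ hb₁

lemma rconj_softplus_of_notMem_Icc {b : ℝ} (hb : b ∉ Set.Icc 0 1) : rconj softplus b = ⊤ := by
  rw [Set.mem_Icc, not_and_or, not_le, not_le] at hb
  rcases hb with hb | hb
  · exact rconj_softplus_eq_top_of_neg hb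
  · rw [← sub_sub_cancel 1 b, rconj_softplus_one_sub]
    exact rconj_softplus_eq_top_of_neg (sub_neg.2 hb)

/-- the Fenchel conjugate of the logistic loss `f(x) = −yx + log(1 + eˣ)` is
`f*(α) = (α+y)·log(α+y) + (1−α−y)·log(1−α−y)` for `0 ≤ α + y ≤ 1` (with `0·log 0 = 0`),
and `+∞` otherwise. -/
theorem stmt_10 (y : ℝ) (f : ℝ → ℝ)
    (hf : ∀ x, f x = -y * x + Real.log (1 + Real.exp x)) :
    ∀ α : ℝ,
      (0 ≤ α + y ∧ α + y ≤ 1 →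
        rconj f α =
          (((α + y) * Real.log (α + y) + (1 - α - y) * Real.log (1 - α - y) : ℝ) : EReal)) ∧
      (¬ (0 ≤ α + y ∧ α + y ≤ 1) → rconj f α = ⊤) := by
  intro α
  rw [rconj_of_eq_neg_mul_add (g := softplus) hf, sub_sub]
  exact ⟨fun h ↦ rconj_softplus_of_mem_Icc h.1 h.2, rconj_softplus_of_notMem_Icc⟩

end
end

section
/- Let A ∈ [0,1]^{n×d}, α ∈ ℝ^n with positive and negative parts α_+ and α_− (so α = α_+ − α_−, α_+, α_− ⪰ 0, componentwise), λ > 0, and let ρ : ℕ → ℝ be monotonically non-decreasing. Let u ⊆ {1,…,d} be nonempty. If max(A_[u]ᵀα_+, A_[u]ᵀα_−) < λ·ρ(|u| + 1), then for every v ⊆ {1,…,d} with v ⊋ u one has |A_[v]ᵀα| < λ·ρ(|v|). -/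
open Matrix

noncomputable section

/-- `prodCol A u` is the entrywise product of the columns of `A` indexed by `u`. -/
def prodCol {n d : ℕ} (A : Matrix (Fin n) (Fin d) ℝ) (u : Finset (Fin d)) : Fin n → ℝ :=
  fun i => ∏ k ∈ u, A i k

lemma prodCol_nonneg {n d : ℕ} (A : Matrix (Fin n) (Fin d) ℝ)
    (hA : ∀ i j, A i j ∈ Set.Icc (0 : ℝ) 1) (u : Finset (Fin d)) (i : Fin n) :
    0 ≤ prodCol A u i :=
  Finset.prod_nonneg fun k _ => (hA i k).1

lemma prodCol_mono {n d : ℕ} (A : Matrix (Fin n) (Fin d) ℝ)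
    (hA : ∀ i j, A i j ∈ Set.Icc (0 : ℝ) 1) {u v : Finset (Fin d)} (huv : u ⊆ v)
    (i : Fin n) : prodCol A v i ≤ prodCol A u i := by
  unfold prodCol
  rw [← Finset.prod_sdiff huv]
  have h1 : ∏ k ∈ v \ u, A i k ≤ 1 :=
    Finset.prod_le_one (fun k _ => (hA i k).1) (fun k _ => (hA i k).2)
  calc (∏ k ∈ v \ u, A i k) * ∏ k ∈ u, A i k
      ≤ 1 * ∏ k ∈ u, A i k := by
        apply mul_le_mul_of_nonneg_right h1
        exact Finset.prod_nonneg fun k _ => (hA i k).1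
    _ = ∏ k ∈ u, A i k := one_mul _

/-- ℓ₁ screening rule: if
`max(A_[u]ᵀα₊, A_[u]ᵀα₋) < λ·ρ(|u| + 1)` then every strict superset `v ⊋ u` satisfies
`|A_[v]ᵀα| < λ·ρ(|v|)`. -/
theorem stmt_13 {n d : ℕ} (A : Matrix (Fin n) (Fin d) ℝ)
    (hA : ∀ i j, A i j ∈ Set.Icc (0 : ℝ) 1)
    (α : Fin n → ℝ) (lam : ℝ) (hlam : 0 < lam)
    (ρ : ℕ → ℝ) (hρ : Monotone ρ)
    (u : Finset (Fin d)) (hu : u.Nonempty)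
    (h : max (prodCol A u ⬝ᵥ fun i => max (α i) 0) (prodCol A u ⬝ᵥ fun i => max (-α i) 0)
          < lam * ρ (u.card + 1)) :
    ∀ v : Finset (Fin d), u ⊂ v → |prodCol A v ⬝ᵥ α| < lam * ρ v.card := by
  intro v hv
  set P := prodCol A v
  set Q := prodCol A u
  have hPQ : ∀ i, P i ≤ Q i := prodCol_mono A hA hv.subset
  have hP0 : ∀ i, 0 ≤ P i := prodCol_nonneg A hA v
  -- dot product comparisons
  have hdot : ∀ β : Fin n → ℝ, (∀ i, 0 ≤ β i) → P ⬝ᵥ β ≤ Q ⬝ᵥ β := by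
    intro β hβ
    apply Finset.sum_le_sum
    intro i _
    exact mul_le_mul_of_nonneg_right (hPQ i) (hβ i)
  have hpos : ∀ β : Fin n → ℝ, (∀ i, 0 ≤ β i) → 0 ≤ P ⬝ᵥ β := by
    intro β hβ
    apply Finset.sum_nonneg
    intro i _
    exact mul_nonneg (hP0 i) (hβ i)
  set ap : Fin n → ℝ := fun i => max (α i) 0
  set an : Fin n → ℝ := fun i => max (-α i) 0
  have hap : ∀ i, 0 ≤ ap i := fun i => le_max_right _ _
  have han : ∀ i, 0 ≤ an i := fun i => le_max_right _ _
  have hsplit : P ⬝ᵥ α = P ⬝ᵥ ap - P ⬝ᵥ an := by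
    unfold dotProduct
    rw [← Finset.sum_sub_distrib]
    apply Finset.sum_congr rfl
    intro i _
    have : α i = ap i - an i := by
      simp only [ap, an]
      rcases le_total (α i) 0 with hle | hle
      · rw [max_eq_right hle, max_eq_left (by linarith)]; ring
      · rw [max_eq_left hle, max_eq_right (by linarith)]; ring
    rw [this]; ring
  have habs : |P ⬝ᵥ α| ≤ max (P ⬝ᵥ ap) (P ⬝ᵥ an) := by
    rw [hsplit, abs_le]
    constructor
    · have := hpos ap hap
      have := le_max_right (P ⬝ᵥ ap) (P ⬝ᵥ an)
      have := le_max_left (P ⬝ᵥ ap) (P ⬝ᵥ an)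
      nlinarith [hpos an han]
    · have := hpos an han
      have := le_max_left (P ⬝ᵥ ap) (P ⬝ᵥ an)
      nlinarith
  have hmax : max (P ⬝ᵥ ap) (P ⬝ᵥ an) ≤ max (Q ⬝ᵥ ap) (Q ⬝ᵥ an) :=
    max_le_max (hdot ap hap) (hdot an han)
  have hcard : u.card + 1 ≤ v.card := Finset.card_lt_card hv
  have hρle : lam * ρ (u.card + 1) ≤ lam * ρ v.card :=
    mul_le_mul_of_nonneg_left (hρ hcard) hlam.le
  calc |P ⬝ᵥ α| ≤ max (P ⬝ᵥ ap) (P ⬝ᵥ an) := habs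
    _ ≤ max (Q ⬝ᵥ ap) (Q ⬝ᵥ an) := hmax
    _ < lam * ρ (u.card + 1) := h
    _ ≤ lam * ρ v.card := hρle

end
end

section
/- Let A ∈ [0,1]^{n×d}, let α ∈ ℝ^n be componentwise non-negative, λ > 0, and let ρ : ℕ → ℝ be monotonically non-decreasing. If a nonempty subset v ⊆ {1,…,d} satisfies A_[v]ᵀα ≥ λ·ρ(|v|), then every nonempty subset u ⊆ v satisfies A_[u]ᵀα ≥ λ·ρ(|u|) (strong hierarchy property). -/
open Matrix

noncomputable section

/-- strong hierarchy property in the non-negative dual regime: if `α ⪰ 0`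
and `A_[v]ᵀα ≥ λ·ρ(|v|)`, then every nonempty `u ⊆ v` satisfies `A_[u]ᵀα ≥ λ·ρ(|u|)`. -/
theorem stmt_14 {n d : ℕ} (A : Matrix (Fin n) (Fin d) ℝ)
    (hA : ∀ i j, A i j ∈ Set.Icc (0 : ℝ) 1)
    (α : Fin n → ℝ) (hα : ∀ i, 0 ≤ α i)
    (lam : ℝ) (hlam : 0 < lam) (ρ : ℕ → ℝ) (hρ : Monotone ρ)
    (v : Finset (Fin d)) (hv : v.Nonempty)
    (h : lam * ρ v.card ≤ prodCol A v ⬝ᵥ α) :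
    ∀ u : Finset (Fin d), u.Nonempty → u ⊆ v → lam * ρ u.card ≤ prodCol A u ⬝ᵥ α := by
  intro u hu huv
  have h1 : lam * ρ u.card ≤ lam * ρ v.card :=
    mul_le_mul_of_nonneg_left (hρ (Finset.card_le_card huv)) hlam.le
  refine h1.trans (h.trans ?_)
  unfold prodCol dotProduct
  refine Finset.sum_le_sum fun i _ => ?_
  refine mul_le_mul_of_nonneg_right ?_ (hα i)
  simp only
  rw [← Finset.prod_sdiff huv]
  calc (∏ k ∈ v \ u, A i k) * ∏ k ∈ u, A i k
      ≤ 1 * ∏ k ∈ u, A i k := by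
        refine mul_le_mul_of_nonneg_right
          (Finset.prod_le_one (fun k _ => (hA i k).1) (fun k _ => (hA i k).2))
          (Finset.prod_nonneg fun k _ => (hA i k).1)
    _ = ∏ k ∈ u, A i k := one_mul _

end
end

section
/- Let M ∈ ℝ^{n×T} have singular value decomposition M = UΣQᵀ, where U and Q have orthonormal columns and Σ is diagonal with non-negative entries σ_1, …, σ_r, and let ρ > 0. Define V* = (1/ρ)·U·min(Σ, ρ)·Qᵀ, where min(Σ, ρ) replaces each σ_k by min(σ_k, ρ). Then V* has operator norm at most 1, and V* minimizes (1/2)‖M − ρV‖_F² over the set {V ∈ ℝ^{n×T} : ‖V‖_2 ≤ 1}, with minimum value (1/2)·Σ_k max(σ_k − ρ, 0)². -/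
open Matrix

noncomputable section

namespace Stmt17Aux

lemma dot_self_nonneg {a : ℕ} (v : Fin a → ℝ) : 0 ≤ v ⬝ᵥ v :=
  Finset.sum_nonneg fun i _ => mul_self_nonneg _

/-- `‖Uz‖² = ‖z‖²` for orthonormal columns. -/
lemma mulVec_dot {a b : ℕ} (U : Matrix (Fin a) (Fin b) ℝ) (hU : Uᵀ * U = 1)
    (z : Fin b → ℝ) : (U *ᵥ z) ⬝ᵥ (U *ᵥ z) = z ⬝ᵥ z := by
  rw [dotProduct_mulVec, ← Matrix.mulVec_transpose, Matrix.mulVec_mulVec, hU,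
    Matrix.one_mulVec]

/-- `‖Qᵀx‖² ≤ ‖x‖²` for orthonormal columns. -/
lemma proj_dot_le {a b : ℕ} (Q : Matrix (Fin a) (Fin b) ℝ) (hQ : Qᵀ * Q = 1)
    (x : Fin a → ℝ) : (Qᵀ *ᵥ x) ⬝ᵥ (Qᵀ *ᵥ x) ≤ x ⬝ᵥ x := by
  set y := Qᵀ *ᵥ x with hy
  have h1 : x ⬝ᵥ (Q *ᵥ y) = y ⬝ᵥ y := by
    rw [dotProduct_mulVec, ← Matrix.mulVec_transpose, hy]
  have h2 : (Q *ᵥ y) ⬝ᵥ (Q *ᵥ y) = y ⬝ᵥ y := mulVec_dot Q hQ y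
  have h0 : 0 ≤ (x - Q *ᵥ y) ⬝ᵥ (x - Q *ᵥ y) := dot_self_nonneg _
  have h3 : (Q *ᵥ y) ⬝ᵥ x = x ⬝ᵥ (Q *ᵥ y) := dotProduct_comm _ _
  rw [sub_dotProduct, dotProduct_sub, dotProduct_sub] at h0
  linarith

/-- Frobenius norm squared is preserved by left mult. by orthonormal-column matrix. -/
lemma fro_mul_left {a b c : ℕ} (U : Matrix (Fin a) (Fin b) ℝ) (hU : Uᵀ * U = 1)
    (C : Matrix (Fin b) (Fin c) ℝ) :
    ∑ i, ∑ j, ((U * C) i j) ^ 2 = ∑ i, ∑ j, (C i j) ^ 2 := by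
  rw [Finset.sum_comm, Finset.sum_comm (γ := Fin b)]
  refine Finset.sum_congr rfl fun j _ => ?_
  have he : ∀ i, (U * C) i j = (U *ᵥ fun k => C k j) i := by
    intro i; simp [Matrix.mul_apply, Matrix.mulVec, dotProduct]
  calc ∑ i, ((U * C) i j) ^ 2
      = (U *ᵥ fun k => C k j) ⬝ᵥ (U *ᵥ fun k => C k j) := by
        simp [dotProduct, he, sq]
    _ = (fun k => C k j) ⬝ᵥ (fun k => C k j) := mulVec_dot U hU _
    _ = ∑ k, (C k j) ^ 2 := by simp [dotProduct, sq]

/-- Frobenius norm squared is preserved by right mult. by `Qᵀ`. -/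
lemma fro_mul_rightT {a b c : ℕ} (Q : Matrix (Fin a) (Fin b) ℝ) (hQ : Qᵀ * Q = 1)
    (B : Matrix (Fin c) (Fin b) ℝ) :
    ∑ i, ∑ j, ((B * Qᵀ) i j) ^ 2 = ∑ i, ∑ j, (B i j) ^ 2 := by
  refine Finset.sum_congr rfl fun k _ => ?_
  have he : ∀ j, (B * Qᵀ) k j = (Q *ᵥ fun l => B k l) j := by
    intro j; simp [Matrix.mul_apply, Matrix.mulVec, dotProduct, mul_comm]
  calc ∑ j, ((B * Qᵀ) k j) ^ 2
      = (Q *ᵥ fun l => B k l) ⬝ᵥ (Q *ᵥ fun l => B k l) := by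
        simp [dotProduct, he, sq]
    _ = (fun l => B k l) ⬝ᵥ (fun l => B k l) := mulVec_dot Q hQ _
    _ = ∑ l, (B k l) ^ 2 := by simp [dotProduct, sq]

/-- Left compression decreases Frobenius norm. -/
lemma fro_mulT_left_le {a b c : ℕ} (U : Matrix (Fin a) (Fin b) ℝ) (hU : Uᵀ * U = 1)
    (A : Matrix (Fin a) (Fin c) ℝ) :
    ∑ i, ∑ j, ((Uᵀ * A) i j) ^ 2 ≤ ∑ i, ∑ j, (A i j) ^ 2 := by
  rw [Finset.sum_comm, Finset.sum_comm (γ := Fin a)]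
  refine Finset.sum_le_sum fun j _ => ?_
  have he : ∀ k, (Uᵀ * A) k j = (Uᵀ *ᵥ fun i => A i j) k := by
    intro k; simp [Matrix.mul_apply, Matrix.mulVec, dotProduct]
  calc ∑ k, ((Uᵀ * A) k j) ^ 2
      = (Uᵀ *ᵥ fun i => A i j) ⬝ᵥ (Uᵀ *ᵥ fun i => A i j) := by
        simp [dotProduct, he, sq]
    _ ≤ (fun i => A i j) ⬝ᵥ (fun i => A i j) := proj_dot_le U hU _
    _ = ∑ i, (A i j) ^ 2 := by simp [dotProduct, sq]

/-- Right compression decreases Frobenius norm. -/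
lemma fro_mul_right_le {a b c : ℕ} (Q : Matrix (Fin a) (Fin b) ℝ) (hQ : Qᵀ * Q = 1)
    (A : Matrix (Fin c) (Fin a) ℝ) :
    ∑ i, ∑ j, ((A * Q) i j) ^ 2 ≤ ∑ i, ∑ j, (A i j) ^ 2 := by
  refine Finset.sum_le_sum fun k _ => ?_
  have he : ∀ j, (A * Q) k j = (Qᵀ *ᵥ fun l => A k l) j := by
    intro j; simp [Matrix.mul_apply, Matrix.mulVec, dotProduct, mul_comm]
  calc ∑ j, ((A * Q) k j) ^ 2
      = (Qᵀ *ᵥ fun l => A k l) ⬝ᵥ (Qᵀ *ᵥ fun l => A k l) := by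
        simp [dotProduct, he, sq]
    _ ≤ (fun l => A k l) ⬝ᵥ (fun l => A k l) := proj_dot_le Q hQ _
    _ = ∑ l, (A k l) ^ 2 := by simp [dotProduct, sq]

end Stmt17Aux

open Stmt17Aux

/-- singular value clipping: for `M = UΣQᵀ` with orthonormal columns and
`σ ⪰ 0`, the matrix `V* = (1/ρ)·U·min(Σ,ρ)·Qᵀ` has operator norm at most 1 and minimizes
`(1/2)‖M − ρV‖_F²` over `{V : ‖V‖₂ ≤ 1}`, with minimum value `(1/2)Σₖ max(σₖ − ρ, 0)²`. -/
theorem stmt_17 {n T r : ℕ} (M : Matrix (Fin n) (Fin T) ℝ)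
    (U : Matrix (Fin n) (Fin r) ℝ) (Q : Matrix (Fin T) (Fin r) ℝ)
    (σ : Fin r → ℝ) (hσ : ∀ k, 0 ≤ σ k)
    (hU : Uᵀ * U = 1) (hQ : Qᵀ * Q = 1)
    (hM : M = U * Matrix.diagonal σ * Qᵀ)
    (ρ : ℝ) (hρ : 0 < ρ)
    (Vstar : Matrix (Fin n) (Fin T) ℝ)
    (hV : Vstar = ρ⁻¹ • (U * Matrix.diagonal (fun k => min (σ k) ρ) * Qᵀ)) :
    (∀ x : Fin T → ℝ, Vstar.mulVec x ⬝ᵥ Vstar.mulVec x ≤ x ⬝ᵥ x) ∧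
    (1 / 2) * (∑ i, ∑ j, ((M - ρ • Vstar) i j) ^ 2) =
      (1 / 2) * ∑ k, max (σ k - ρ) 0 ^ 2 ∧
    ∀ V : Matrix (Fin n) (Fin T) ℝ,
      (∀ x : Fin T → ℝ, V.mulVec x ⬝ᵥ V.mulVec x ≤ x ⬝ᵥ x) →
      (1 / 2) * (∑ i, ∑ j, ((M - ρ • Vstar) i j) ^ 2) ≤
        (1 / 2) * (∑ i, ∑ j, ((M - ρ • V) i j) ^ 2) := by
  have hρ' : ρ ≠ 0 := ne_of_gt hρ
  -- the residual matrix for Vstar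
  have hres : M - ρ • Vstar = U * Matrix.diagonal (fun k => max (σ k - ρ) 0) * Qᵀ := by
    rw [hM, hV, smul_smul, mul_inv_cancel₀ hρ', one_smul, ← Matrix.sub_mul,
      ← Matrix.mul_sub, Matrix.diagonal_sub]
    have hfun : (fun k => σ k - min (σ k) ρ) = (fun k => max (σ k - ρ) 0) := by
      funext k
      rcases le_total (σ k) ρ with h | h
      · rw [min_eq_left h, max_eq_right (by linarith : σ k - ρ ≤ 0), sub_self]
      · rw [min_eq_right h, max_eq_left (by linarith : 0 ≤ σ k - ρ)]
    rw [hfun]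
  -- value of the objective at Vstar
  have hval : (∑ i, ∑ j, ((M - ρ • Vstar) i j) ^ 2) = ∑ k, max (σ k - ρ) 0 ^ 2 := by
    rw [hres, fro_mul_rightT Q hQ, fro_mul_left U hU]
    refine Finset.sum_congr rfl fun k _ => ?_
    have : ∀ j, (Matrix.diagonal (fun k => max (σ k - ρ) 0) k j) ^ 2 =
        if j = k then max (σ k - ρ) 0 ^ 2 else 0 := by
      intro j
      rcases eq_or_ne j k with h | h
      · simp [h, Matrix.diagonal_apply]
      · simp [Matrix.diagonal_apply, Ne.symm h, h]
    simp [this]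
  refine ⟨?_, ?_, ?_⟩
  · -- operator norm bound
    intro x
    rw [hV, Matrix.smul_mulVec, smul_dotProduct, dotProduct_smul,
      ← Matrix.mulVec_mulVec, ← Matrix.mulVec_mulVec,
      mulVec_dot U hU, smul_eq_mul, smul_eq_mul]
    set y := Qᵀ *ᵥ x with hy
    have hd : ∀ k, (Matrix.diagonal (fun k => min (σ k) ρ) *ᵥ y) k = min (σ k) ρ * y k :=
      fun k => Matrix.mulVec_diagonal _ _ _
    have h1 : (Matrix.diagonal (fun k => min (σ k) ρ) *ᵥ y) ⬝ᵥ
        (Matrix.diagonal (fun k => min (σ k) ρ) *ᵥ y) ≤ ρ ^ 2 * (y ⬝ᵥ y) := by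
      simp only [dotProduct, hd, Finset.mul_sum]
      refine Finset.sum_le_sum fun k _ => ?_
      have h2 : 0 ≤ min (σ k) ρ := le_min (hσ k) hρ.le
      have h3 : min (σ k) ρ ≤ ρ := min_le_right _ _
      have h35 : min (σ k) ρ * min (σ k) ρ ≤ ρ * ρ := mul_le_mul h3 h3 h2 hρ.le
      nlinarith [mul_self_nonneg (y k)]
    have h4 : y ⬝ᵥ y ≤ x ⬝ᵥ x := proj_dot_le Q hQ x
    have h5 : 0 ≤ y ⬝ᵥ y := dot_self_nonneg y
    calc ρ⁻¹ * (ρ⁻¹ * ((Matrix.diagonal (fun k => min (σ k) ρ) *ᵥ y) ⬝ᵥ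
          (Matrix.diagonal (fun k => min (σ k) ρ) *ᵥ y)))
        ≤ ρ⁻¹ * (ρ⁻¹ * (ρ ^ 2 * (y ⬝ᵥ y))) := by
          have := inv_nonneg.mpr hρ.le
          gcongr
      _ = y ⬝ᵥ y := by field_simp [sq]
      _ ≤ x ⬝ᵥ x := h4
  · rw [hval]
  · -- optimality
    intro V hVop
    rw [hval]
    have key : ∑ k, max (σ k - ρ) 0 ^ 2 ≤ ∑ i, ∑ j, ((M - ρ • V) i j) ^ 2 := by
      set A := M - ρ • V with hA
      set B := Uᵀ * A * Q with hB
      have hBMQ : Uᵀ * M * Q = Matrix.diagonal σ := by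
        rw [hM]
        calc Uᵀ * (U * Matrix.diagonal σ * Qᵀ) * Q
            = (Uᵀ * U) * Matrix.diagonal σ * (Qᵀ * Q) := by
              simp only [Matrix.mul_assoc]
          _ = Matrix.diagonal σ := by rw [hU, hQ, Matrix.one_mul, Matrix.mul_one]
      -- diagonal entries of B
      have hdiag : ∀ k, σ k - ρ ≤ B k k := by
        intro k
        have hBk : B k k = σ k - ρ * ((Uᵀ * V * Q) k k) := by
          rw [hB, hA]
          have : Uᵀ * (M - ρ • V) * Q = Uᵀ * M * Q - ρ • (Uᵀ * V * Q) := by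
            rw [Matrix.mul_sub, Matrix.sub_mul, Matrix.mul_smul, Matrix.smul_mul]
          rw [this, hBMQ]
          simp [Matrix.diagonal_apply]
        -- show (Uᵀ V Q) k k ≤ 1
        set u : Fin n → ℝ := fun i => U i k with hu
        set q : Fin T → ℝ := fun j => Q j k with hq
        have huu : u ⬝ᵥ u = 1 := by
          have := congrFun (congrFun hU k) k
          simpa [Matrix.mul_apply, Matrix.one_apply, dotProduct, hu] using this
        have hqq : q ⬝ᵥ q = 1 := by
          have := congrFun (congrFun hQ k) k
          simpa [Matrix.mul_apply, Matrix.one_apply, dotProduct, hq] using this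
        have hc : (Uᵀ * V * Q) k k = u ⬝ᵥ (V *ᵥ q) := by
          simp [Matrix.mul_apply, Matrix.mulVec, dotProduct, Finset.mul_sum,
            Finset.sum_mul, hu, hq, mul_assoc]
          rw [Finset.sum_comm]
        have hVq : (V *ᵥ q) ⬝ᵥ (V *ᵥ q) ≤ 1 := by
          calc (V *ᵥ q) ⬝ᵥ (V *ᵥ q) ≤ q ⬝ᵥ q := hVop q
            _ = 1 := hqq
        have hcs : (u ⬝ᵥ (V *ᵥ q)) ^ 2 ≤ (u ⬝ᵥ u) * ((V *ᵥ q) ⬝ᵥ (V *ᵥ q)) := by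
          have := Finset.sum_mul_sq_le_sq_mul_sq Finset.univ u (V *ᵥ q)
          simpa [dotProduct, sq] using this
        have hc1 : (Uᵀ * V * Q) k k ≤ 1 := by
          rw [hc]
          nlinarith [dot_self_nonneg (V *ᵥ q)]
        rw [hBk]
        nlinarith
      calc ∑ k, max (σ k - ρ) 0 ^ 2
          ≤ ∑ k, (B k k) ^ 2 := by
            refine Finset.sum_le_sum fun k _ => ?_
            rcases le_total (σ k) ρ with h | h
            · have : max (σ k - ρ) 0 = 0 := max_eq_right (by linarith)
              rw [this]
              simpa using sq_nonneg (B k k)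
            · have hm : max (σ k - ρ) 0 = σ k - ρ := max_eq_left (by linarith)
              rw [hm]
              nlinarith [hdiag k]
        _ ≤ ∑ k, ∑ j, (B k j) ^ 2 := by
            refine Finset.sum_le_sum fun k _ => ?_
            exact Finset.single_le_sum (fun j _ => sq_nonneg (B k j))
              (Finset.mem_univ k)
        _ ≤ ∑ k, ∑ j, ((Uᵀ * A) k j) ^ 2 := fro_mul_right_le Q hQ (Uᵀ * A)
        _ ≤ ∑ i, ∑ j, (A i j) ^ 2 := fro_mulT_left_le U hU A
    linarith

end
end
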